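/- The number operator N (acting as n·I on SⁿV, extended to SV' by antiduality) has kernel ζ_V·e^{Z_V} ∈ SV_ℂ': for φ, ψ ∈ SⁿV, (ζ_V e^{Z_V})(ψ₊φ₋) = n⟨ψ|φ⟩ = ⟨ψ|Nφ⟩. -/

import Mathlib

open scoped ComplexConjugate

noncomputable section

section Defs

variable {V W A : Type} [AddCommGroup V] [Module ℂ V] [CommRing A] [Algebra ℂ A]

/-- `A` (with embedding `ι`) is the symmetric algebra of `V`: universal property. -/
def IsSymmAlg (ι : V →ₗ[ℂ] A) : Prop :=
  ∀ (B : Type) [CommRing B] [Algebra ℂ B] (f : V →ₗ[ℂ] B),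
    ∃! F : A →ₐ[ℂ] B, ∀ v, F (ι v) = f v

/-- The span of `n`-fold products of generators: the degree-`n` part. -/
def GradeOf (gen : W → A) (n : ℕ) : Submodule ℂ A :=
  Submodule.span ℂ {a | ∃ f : Fin n → W, a = ∏ i, gen (f i)}

/-- The algebra is spanned by products of generators. -/
def SpanProdsOf (gen : W → A) : Prop :=
  ∀ x : A, x ∈ Submodule.span ℂ {a | ∃ (n : ℕ) (f : Fin n → W), a = ∏ i, gen (f i)}

/-- A quadratic: an antilinear functional concentrated in degree 2. -/
def IsQuadOf (gen : W → A) (ζ : A →ₗ⋆[ℂ] ℂ) : Prop :=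
  ∀ n : ℕ, n ≠ 2 → ∀ φ ∈ GradeOf gen n, ζ φ = 0

/-- The commutative product on the full antidual induced by the coproduct,
characterized on products of generators. -/
def IsConvProdOf (gen : W → A)
    (mul : (A →ₗ⋆[ℂ] ℂ) → (A →ₗ⋆[ℂ] ℂ) → (A →ₗ⋆[ℂ] ℂ)) : Prop :=
  ∀ (Φ Ψ : A →ₗ⋆[ℂ] ℂ) (n : ℕ) (v : Fin n → W),
    mul Φ Ψ (∏ i, gen (v i)) =
      ∑ S : Finset (Fin n), Φ (∏ i ∈ S, gen (v i)) * Ψ (∏ i ∈ Sᶜ, gen (v i))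

/-- The counit (unit of the antidual algebra): kills products of at least one generator. -/
def IsCounitOf (gen : W → A) (ε : A →ₗ⋆[ℂ] ℂ) : Prop :=
  ∀ (n : ℕ) (v : Fin n → W), ε (∏ i, gen (v i)) = if n = 0 then 1 else 0

/-- Powers of a functional with respect to the convolution product. -/
def powD (mul : (A →ₗ⋆[ℂ] ℂ) → (A →ₗ⋆[ℂ] ℂ) → (A →ₗ⋆[ℂ] ℂ))
    (ε ζ : A →ₗ⋆[ℂ] ℂ) : ℕ → (A →ₗ⋆[ℂ] ℂ)
  | 0 => ε
  | n + 1 => mul ζ (powD mul ε ζ n)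

/-- `E` is the Gaussian `exp ζ = Σ ζⁿ/n!` (a finite sum in each degree). -/
def IsGaussianOf (gen : W → A)
    (mul : (A →ₗ⋆[ℂ] ℂ) → (A →ₗ⋆[ℂ] ℂ) → (A →ₗ⋆[ℂ] ℂ))
    (ε ζ E : A →ₗ⋆[ℂ] ℂ) : Prop :=
  ∀ k : ℕ, ∀ ψ ∈ GradeOf gen k,
    E ψ = ∑ n ∈ Finset.range (k + 1), ((n.factorial : ℂ))⁻¹ * powD mul ε ζ n ψ

end Defs

section Defs2

variable {V A : Type} [NormedAddCommGroup V] [InnerProductSpace ℂ V]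
  [CommRing A] [Algebra ℂ A]

/-- The family of annihilation operators: derivations killing `1` with
`a v (ι w) = ⟨v|w⟩ 1`. -/
def IsAnn (ι : V →ₗ[ℂ] A) (a : V → A →ₗ[ℂ] A) : Prop :=
  ∀ v : V, (∀ x y : A, a v (x * y) = a v x * y + x * a v y) ∧
    a v 1 = 0 ∧ ∀ w : V, a v (ι w) = (inner ℂ v w : ℂ) • (1 : A)

/-- The canonical inner product on the symmetric algebra: graded pieces are
orthogonal and the permanent formula holds. (Antilinear in the first slot.) -/
def IsCanonInner (ι : V →ₗ[ℂ] A) (Bf : A →ₗ⋆[ℂ] A →ₗ[ℂ] ℂ) : Prop :=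
  (∀ (k n : ℕ), k ≠ n → ∀ (x : Fin k → V) (y : Fin n → V),
      Bf (∏ i, ι (x i)) (∏ i, ι (y i)) = 0) ∧
  ∀ (n : ℕ) (x y : Fin n → V),
      Bf (∏ i, ι (x i)) (∏ i, ι (y i)) =
        ∑ p : Equiv.Perm (Fin n), ∏ i, (inner ℂ (x i) (y (p i)) : ℂ)

/-- Iterated annihilation `a(vₙ)⋯a(v₁)φ` (applying `a(v₁)` first). -/
def iterAnn (a : V → A →ₗ[ℂ] A) : (n : ℕ) → (Fin n → V) → A → A
  | 0, _, φ => φ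
  | n + 1, v, φ => a (v (Fin.last n)) (iterAnn a n (fun i => v i.castSucc) φ)

/-- A symmetric bi-antilinear map `V × V → ℂ`. -/
def IsSymAnti (Z : V → V → ℂ) : Prop :=
  (∀ x y, Z x y = Z y x) ∧
  (∀ x y y', Z x (y + y') = Z x y + Z x y') ∧
  (∀ (c : ℂ) (x y : V), Z x (c • y) = conj c * Z x y)

end Defs2

section DefsC

variable {A AC : Type} [CommRing A] [Algebra ℂ A] [CommRing AC] [Algebra ℂ AC]

/-- An antilinear (conjugate-linear) algebra morphism, such as `φ ↦ φ₋`. -/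
def IsAntiAlgHom (m : A → AC) : Prop :=
  (∀ x y : A, m (x + y) = m x + m y) ∧ (∀ (c : ℂ) (x : A), m (c • x) = conj c • m x) ∧
  (∀ x y : A, m (x * y) = m x * m y) ∧ m 1 = 1

end DefsC

/-! On a product of `2r` generators, `e^{Z_V}` is `ζ_Vʳ/r!`, so there `ζ_V e^{Z_V} = r e^{Z_V}`;
since `ψ₊φ₋` has degree `2n`, it remains to show `e^{Z_V}(ψ₊φ₋) = ⟨ψ|φ⟩`, and by sesquilinearity
only for products of vectors. Expanding `ζ_V e^{Z_V}` along the coproduct, only the pairs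
`x₊y₋` survive, so `(r + 1) e^{Z_V}(x₊y₋) = ∑_{a,b} ⟨x_a|y_b⟩ e^{Z_V}(x̂_a₊ ŷ_b₋)`. The permanent
`⟨∏ x|∏ y⟩` obeys the same recursion by row expansion, and both sides vanish unless the two
degrees agree. -/

open Finset

section FinsetEnum

variable {I : Type*}

def finsetEnum (S : Finset I) : Fin #S ↪ I :=
  S.equivFin.symm.toEmbedding.trans (Function.Embedding.subtype _)

theorem map_univ_finsetEnum (S : Finset I) : univ.map (finsetEnum S) = S := by
  rw [finsetEnum, ← map_map, map_univ_equiv, univ_eq_attach, attach_map_val]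

theorem prod_eq_prod_finsetEnum {M : Type*} [CommMonoid M] (S : Finset I) (f : I → M) :
    ∏ i ∈ S, f i = ∏ j, f (finsetEnum S j) := by
  conv_lhs => rw [← map_univ_finsetEnum S]
  exact prod_map _ _ _

theorem sum_powerset_eq_sum_finsetEnum [DecidableEq I] {M : Type*} [AddCommMonoid M]
    (S : Finset I) (g : Finset I → Finset I → M) :
    ∑ T ∈ S.powerset, g T (S \ T) =
      ∑ U : Finset (Fin #S), g (U.map (finsetEnum S)) (Uᶜ.map (finsetEnum S)) := by
  conv_lhs => rw [← map_univ_finsetEnum S]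
  rw [map_eq_image, powerset_image, powerset_univ,
    sum_image fun U _ U' _ h => image_injective (finsetEnum S).injective h]
  refine sum_congr rfl fun U _ => ?_
  rw [← image_sdiff _ _ (finsetEnum S).injective, compl_eq_univ_sdiff, map_eq_image, map_eq_image]

end FinsetEnum

section FinsetProducts

variable {W AC : Type} [CommRing AC] [Algebra ℂ AC] {gen : W → AC}
  {mul : (AC →ₗ⋆[ℂ] ℂ) → (AC →ₗ⋆[ℂ] ℂ) → (AC →ₗ⋆[ℂ] ℂ)} {ε ζ E : AC →ₗ⋆[ℂ] ℂ}
  {I : Type*}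

theorem prod_mem_gradeOf (v : I → W) (S : Finset I) : ∏ i ∈ S, gen (v i) ∈ GradeOf gen #S :=
  Submodule.subset_span ⟨fun j => v (finsetEnum S j), prod_eq_prod_finsetEnum S _⟩

theorem IsCounitOf.apply_prod (h : IsCounitOf gen ε) (v : I → W) (S : Finset I) :
    ε (∏ i ∈ S, gen (v i)) = if #S = 0 then 1 else 0 := by
  rw [prod_eq_prod_finsetEnum S fun i => gen (v i), h #S]

theorem IsQuadOf.apply_prod_of_card_ne (h : IsQuadOf gen ζ) (v : I → W) {S : Finset I}
    (hS : #S ≠ 2) : ζ (∏ i ∈ S, gen (v i)) = 0 :=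
  h #S hS _ (prod_mem_gradeOf v S)

variable [DecidableEq I]

theorem IsConvProdOf.apply_prod (h : IsConvProdOf gen mul) (Φ Ψ : AC →ₗ⋆[ℂ] ℂ)
    (v : I → W) (S : Finset I) :
    mul Φ Ψ (∏ i ∈ S, gen (v i)) =
      ∑ T ∈ S.powerset, Φ (∏ i ∈ T, gen (v i)) * Ψ (∏ i ∈ S \ T, gen (v i)) := by
  simp only [sum_powerset_eq_sum_finsetEnum S fun T T' =>
      Φ (∏ i ∈ T, gen (v i)) * Ψ (∏ i ∈ T', gen (v i)), prod_map,
    prod_eq_prod_finsetEnum S fun i => gen (v i)]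
  exact h Φ Ψ #S _

theorem powD_apply_prod_of_card_ne (hmul : IsConvProdOf gen mul) (hε : IsCounitOf gen ε)
    (hζ : IsQuadOf gen ζ) (v : I → W) (r : ℕ) {S : Finset I} (hS : #S ≠ 2 * r) :
    powD mul ε ζ r (∏ i ∈ S, gen (v i)) = 0 := by
  induction r generalizing S with
  | zero =>
    rw [powD, hε.apply_prod, if_neg hS]
  | succ r ih =>
    rw [powD, hmul.apply_prod]
    refine sum_eq_zero fun T hT => ?_
    by_cases hT2 : #T = 2
    · have := card_le_card (mem_powerset.mp hT)
      rw [ih (by rw [card_sdiff_of_subset (mem_powerset.mp hT)]; omega), mul_zero]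
    · rw [hζ.apply_prod_of_card_ne v hT2, zero_mul]

theorem IsGaussianOf.apply_prod_of_card_eq (hE : IsGaussianOf gen mul ε ζ E)
    (hmul : IsConvProdOf gen mul) (hε : IsCounitOf gen ε) (hζ : IsQuadOf gen ζ)
    (v : I → W) {S : Finset I} {r : ℕ} (hS : #S = 2 * r) :
    E (∏ i ∈ S, gen (v i)) = (r.factorial : ℂ)⁻¹ * powD mul ε ζ r (∏ i ∈ S, gen (v i)) := by
  rw [hE #S _ (prod_mem_gradeOf v S)]
  refine sum_eq_single r (fun s _ hs => ?_) (fun hr => absurd (mem_range.mpr (by omega)) hr)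
  rw [powD_apply_prod_of_card_ne hmul hε hζ v s (by omega), mul_zero]

theorem IsGaussianOf.apply_prod_of_odd (hE : IsGaussianOf gen mul ε ζ E)
    (hmul : IsConvProdOf gen mul) (hε : IsCounitOf gen ε) (hζ : IsQuadOf gen ζ)
    (v : I → W) {S : Finset I} (hS : Odd #S) : E (∏ i ∈ S, gen (v i)) = 0 := by
  rw [hE #S _ (prod_mem_gradeOf v S)]
  refine sum_eq_zero fun r _ => ?_
  rw [powD_apply_prod_of_card_ne hmul hε hζ v r (by obtain ⟨c, hc⟩ := hS; omega), mul_zero]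

theorem IsGaussianOf.mul_apply_prod (hE : IsGaussianOf gen mul ε ζ E)
    (hmul : IsConvProdOf gen mul) (hε : IsCounitOf gen ε) (hζ : IsQuadOf gen ζ)
    (v : I → W) {S : Finset I} {r : ℕ} (hS : #S = 2 * r) :
    mul ζ E (∏ i ∈ S, gen (v i)) = r * E (∏ i ∈ S, gen (v i)) := by
  rw [hmul.apply_prod]
  rcases r with _ | r
  · rw [Nat.cast_zero, zero_mul]
    refine sum_eq_zero fun T hT => ?_
    have : #T ≠ 2 := by have := card_le_card (mem_powerset.mp hT); omega
    rw [hζ.apply_prod_of_card_ne v this, zero_mul]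
  have hterm : ∀ T ∈ S.powerset, ζ (∏ i ∈ T, gen (v i)) * E (∏ i ∈ S \ T, gen (v i)) =
      (r.factorial : ℂ)⁻¹ * (ζ (∏ i ∈ T, gen (v i)) * powD mul ε ζ r (∏ i ∈ S \ T, gen (v i))) := by
    intro T hT
    by_cases hT2 : #T = 2
    · have := card_le_card (mem_powerset.mp hT)
      rw [hE.apply_prod_of_card_eq hmul hε hζ v (r := r)
        (by rw [card_sdiff_of_subset (mem_powerset.mp hT)]; omega)]
      ring
    · rw [hζ.apply_prod_of_card_ne v hT2]
      ring
  rw [sum_congr rfl hterm, ← mul_sum, ← hmul.apply_prod, ← powD.eq_2 mul ε ζ r,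
    hE.apply_prod_of_card_eq hmul hε hζ v hS, ← mul_assoc, Nat.factorial_succ]
  push_cast
  field_simp

theorem IsGaussianOf.apply_one (hE : IsGaussianOf gen mul ε ζ E)
    (hmul : IsConvProdOf gen mul) (hε : IsCounitOf gen ε) (hζ : IsQuadOf gen ζ) : E 1 = 1 := by
  have h := hE.apply_prod_of_card_eq hmul hε hζ (Fin.elim0 : Fin 0 → W) (S := univ) (r := 0) rfl
  rw [powD, hε.apply_prod] at h
  simpa using h

end FinsetProducts

section PairExpansion

variable {W AC : Type} [CommRing AC] [Algebra ℂ AC] {gen : W → AC}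
  {mul : (AC →ₗ⋆[ℂ] ℂ) → (AC →ₗ⋆[ℂ] ℂ) → (AC →ₗ⋆[ℂ] ℂ)} {ζ : AC →ₗ⋆[ℂ] ℂ}
  {α β : Type*} [Fintype α] [Fintype β] [DecidableEq α] [DecidableEq β]

theorem IsConvProdOf.mul_apply_prod_sum_of_isQuadOf (hmul : IsConvProdOf gen mul)
    (hζ : IsQuadOf gen ζ) (Ψ : AC →ₗ⋆[ℂ] ℂ) (v : α ⊕ β → W)
    (hll : ∀ a a', ζ (gen (v (.inl a)) * gen (v (.inl a'))) = 0)
    (hrr : ∀ b b', ζ (gen (v (.inr b)) * gen (v (.inr b'))) = 0) :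
    mul ζ Ψ (∏ i, gen (v i)) = ∑ a, ∑ b, ζ (gen (v (.inl a)) * gen (v (.inr b))) *
      Ψ (∏ i ∈ {.inl a, .inr b}ᶜ, gen (v i)) := by
  let pair : α × β → Finset (α ⊕ β) := fun ab => {.inl ab.1, .inr ab.2}
  have hpair_inj : Set.InjOn pair (univ : Finset (α × β)) := by
    rintro ⟨a, b⟩ - ⟨a', b'⟩ - h
    have ha : Sum.inl a ∈ pair (a', b') := h ▸ by simp [pair]
    have hb : Sum.inr b ∈ pair (a', b') := h ▸ by simp [pair]
    simp only [pair, mem_insert, mem_singleton, Sum.inl.injEq, Sum.inr.injEq, reduceCtorEq,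
      or_false, false_or] at ha hb
    rw [ha, hb]
  have hvanish : ∀ T ∈ (univ : Finset (α ⊕ β)).powerset, T ∉ univ.image pair →
      ζ (∏ i ∈ T, gen (v i)) * Ψ (∏ i ∈ univ \ T, gen (v i)) = 0 := by
    intro T _ hT
    by_cases hT2 : #T = 2
    · obtain ⟨c, d, hcd, rfl⟩ := card_eq_two.mp hT2
      rcases c with a | b <;> rcases d with a' | b'
      · rw [prod_pair hcd, hll, zero_mul]
      · exact absurd (mem_image.mpr ⟨(a, b'), mem_univ _, rfl⟩) hT
      · exact absurd (mem_image.mpr ⟨(a', b), mem_univ _, pair_comm _ _⟩) hT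
      · rw [prod_pair hcd, hrr, zero_mul]
    · rw [hζ.apply_prod_of_card_ne v hT2, zero_mul]
  rw [hmul.apply_prod, powerset_univ, ← sum_subset (subset_univ _) hvanish, sum_image hpair_inj,
    Fintype.sum_prod_type]
  simp only [pair, prod_pair Sum.inl_ne_inr, compl_eq_univ_sdiff]

end PairExpansion

theorem prod_compl_inl_inr {M : Type*} [CommMonoid M] {k l : ℕ}
    (f : Fin (k + 1) ⊕ Fin (l + 1) → M) (a : Fin (k + 1)) (b : Fin (l + 1)) :
    ∏ i ∈ {.inl a, .inr b}ᶜ, f i = ∏ i, f (Sum.map a.succAbove b.succAbove i) := by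
  have hcompl : ({.inl a, .inr b}ᶜ : Finset (Fin (k + 1) ⊕ Fin (l + 1))) =
      univ.map (a.succAboveEmb.sumMap b.succAboveEmb) := by
    ext (i | j) <;> simp [Fin.exists_succAbove_eq_iff]
  rw [hcompl, prod_map]
  rfl

theorem sum_perm_prod_succ_row {R : Type*} [CommSemiring R] {n : ℕ}
    (f : Fin (n + 1) → Fin (n + 1) → R) (a : Fin (n + 1)) :
    ∑ σ : Equiv.Perm (Fin (n + 1)), ∏ i, f i (σ i) =
      ∑ b, f a b * ∑ τ : Equiv.Perm (Fin n), ∏ i, f (a.succAbove i) (b.succAbove (τ i)) := by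
  let Φ : Fin (n + 1) × Equiv.Perm (Fin n) → Equiv.Perm (Fin (n + 1)) := fun bτ =>
    (finSuccEquiv' a).trans (bτ.2.optionCongr.trans (finSuccEquiv' bτ.1).symm)
  have hΦ_pivot : ∀ bτ, Φ bτ a = bτ.1 := by
    intro bτ
    simp [Φ, finSuccEquiv'_at]
  have hΦ_succAbove : ∀ bτ i, Φ bτ (a.succAbove i) = bτ.1.succAbove (bτ.2 i) := by
    intro bτ i
    simp [Φ, finSuccEquiv'_succAbove]
  have hΦ_inj : Function.Injective Φ := by
    rintro ⟨b, τ⟩ ⟨b', τ'⟩ h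
    obtain rfl : b = b' := by simpa only [hΦ_pivot] using congrArg (· a) h
    refine Prod.ext rfl (Equiv.ext fun i => Fin.succAbove_right_injective (p := b) ?_)
    simpa only [hΦ_succAbove] using congrArg (· (a.succAbove i)) h
  have hΦ_bij : Function.Bijective Φ := by
    refine (Fintype.bijective_iff_injective_and_card Φ).mpr ⟨hΦ_inj, ?_⟩
    simp [Fintype.card_perm, Nat.factorial_succ]
  rw [← Fintype.sum_bijective Φ hΦ_bij _ _ fun bτ => (Fin.prod_univ_succAbove _ a).symm]
  simp only [hΦ_pivot, hΦ_succAbove, Fintype.sum_prod_type, Finset.mul_sum]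

theorem IsAntiAlgHom.map_prod {A AC : Type} [CommRing A] [Algebra ℂ A] [CommRing AC]
    [Algebra ℂ AC] {m : A → AC} (hm : IsAntiAlgHom m) {J : Type*} (s : Finset J) (f : J → A) :
    m (∏ i ∈ s, f i) = ∏ i ∈ s, m (f i) := by
  induction s using Finset.cons_induction with
  | empty => simpa using hm.2.2.2
  | cons a s ha ih => rw [prod_cons, prod_cons, hm.2.2.1, ih]

section PlusMinus

variable {V A AC : Type} [NormedAddCommGroup V] [InnerProductSpace ℂ V]
  [CommRing A] [Algebra ℂ A] [CommRing AC] [Algebra ℂ AC]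
  {ι : V →ₗ[ℂ] A} {Bf : A →ₗ⋆[ℂ] A →ₗ[ℂ] ℂ} {p : A →ₐ[ℂ] AC} {m : A → AC} {gen : V ⊕ V → AC}
  {mul : (AC →ₗ⋆[ℂ] ℂ) → (AC →ₗ⋆[ℂ] ℂ) → (AC →ₗ⋆[ℂ] ℂ)} {ε ζ E : AC →ₗ⋆[ℂ] ℂ}

theorem prod_gen_sumMap (hgen : ∀ w, gen w = Sum.elim (fun v => p (ι v)) (fun v => m (ι v)) w)
    (hm : IsAntiAlgHom m) {k l : ℕ} (x : Fin k → V) (y : Fin l → V) :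
    ∏ i, gen (Sum.map x y i) = p (∏ i, ι (x i)) * m (∏ j, ι (y j)) := by
  simp only [Fintype.prod_sum_type, hgen, Sum.map_inl, Sum.map_inr, Sum.elim_inl, Sum.elim_inr,
    map_prod, hm.map_prod]

theorem IsConvProdOf.mul_apply_prod_sumMap (hmul : IsConvProdOf gen mul)
    (hgen : ∀ w, gen w = Sum.elim (fun v => p (ι v)) (fun v => m (ι v)) w) (hζ : IsQuadOf gen ζ)
    (hζpm : ∀ x y : V, ζ (p (ι x) * m (ι y)) = (inner ℂ x y : ℂ))
    (hζpp : ∀ x y : V, ζ (p (ι x) * p (ι y)) = 0)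
    (hζmm : ∀ x y : V, ζ (m (ι x) * m (ι y)) = 0)
    (Ψ : AC →ₗ⋆[ℂ] ℂ) {k l : ℕ} (x : Fin k → V) (y : Fin l → V) :
    mul ζ Ψ (∏ i, gen (Sum.map x y i)) = ∑ a, ∑ b, (inner ℂ (x a) (y b) : ℂ) *
      Ψ (∏ i ∈ {.inl a, .inr b}ᶜ, gen (Sum.map x y i)) := by
  rw [hmul.mul_apply_prod_sum_of_isQuadOf hζ Ψ _ (by simp [hgen, hζpp]) (by simp [hgen, hζmm])]
  simp only [hgen, Sum.map_inl, Sum.map_inr, Sum.elim_inl, Sum.elim_inr, hζpm]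

theorem IsGaussianOf.apply_prod_sumMap (hE : IsGaussianOf gen mul ε ζ E)
    (hB : IsCanonInner ι Bf)
    (hgen : ∀ w, gen w = Sum.elim (fun v => p (ι v)) (fun v => m (ι v)) w)
    (hmul : IsConvProdOf gen mul) (hε : IsCounitOf gen ε) (hζ : IsQuadOf gen ζ)
    (hζpm : ∀ x y : V, ζ (p (ι x) * m (ι y)) = (inner ℂ x y : ℂ))
    (hζpp : ∀ x y : V, ζ (p (ι x) * p (ι y)) = 0)
    (hζmm : ∀ x y : V, ζ (m (ι x) * m (ι y)) = 0) {k l : ℕ} (x : Fin k → V) (y : Fin l → V) :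
    E (∏ i, gen (Sum.map x y i)) = Bf (∏ i, ι (x i)) (∏ j, ι (y j)) := by
  induction hM : k + l using Nat.strong_induction_on generalizing k l with
  | _ M ih =>
  have hrec : ∀ t, k + l = 2 * (t + 1) → ((t + 1 : ℕ) : ℂ) * E (∏ i, gen (Sum.map x y i)) =
      ∑ a, ∑ b, (inner ℂ (x a) (y b) : ℂ) * E (∏ i ∈ {.inl a, .inr b}ᶜ, gen (Sum.map x y i)) :=
    fun t ht => by
      rw [← hE.mul_apply_prod hmul hε hζ _ (by simpa using ht),
        hmul.mul_apply_prod_sumMap hgen hζ hζpm hζpp hζmm]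
  rcases Nat.even_or_odd (k + l) with ⟨t, ht⟩ | hodd
  · rcases t with _ | t
    · obtain ⟨rfl, rfl⟩ : k = 0 ∧ l = 0 := by omega
      rw [hB.2]
      simp [hE.apply_one hmul hε hζ]
    have h := hrec t (by omega)
    rcases k with _ | k
    · rw [hB.1 0 l (by omega)]
      simpa [Nat.cast_add_one_ne_zero] using h
    rcases l with _ | l
    · rw [hB.1 _ 0 (by omega)]
      simpa [Nat.cast_add_one_ne_zero] using h
    have ih' : ∀ (x' : Fin k → V) (y' : Fin l → V),
        E (∏ i, gen (Sum.map x' y' i)) = Bf (∏ i, ι (x' i)) (∏ j, ι (y' j)) :=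
      fun x' y' => ih (k + l) (by omega) x' y' rfl
    simp only [prod_compl_inl_inr, Sum.map_map, ih'] at h
    by_cases hkl : k = l
    · subst hkl
      have hrow := fun a => (sum_perm_prod_succ_row (fun i j => (inner ℂ (x i) (y j) : ℂ)) a).symm
      simp only [hB.2, Function.comp_apply, hrow, sum_const, card_univ, Fintype.card_fin,
        nsmul_eq_mul] at h ⊢
      obtain rfl : k = t := by omega
      exact mul_left_cancel₀ (Nat.cast_add_one_ne_zero k) (by exact_mod_cast h)
    · rw [hB.1 _ _ (by omega)]
      simp only [hB.1 k l hkl, mul_zero, sum_const_zero, mul_eq_zero] at h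
      exact h.resolve_left (Nat.cast_ne_zero.mpr t.succ_ne_zero)
  · rw [hE.apply_prod_of_odd hmul hε hζ _ (by simpa using hodd), hB.1 k l]
    rintro rfl
    exact Nat.not_odd_iff_even.mpr ⟨k, rfl⟩ hodd

end PlusMinus

theorem LinearMap.eqOn_span₂ {R R₂ S S₂ M N P : Type*} [CommSemiring R] [CommSemiring R₂]
    [CommSemiring S] [CommSemiring S₂] [AddCommMonoid M] [AddCommMonoid N] [AddCommMonoid P]
    [Module R M] [Module S N] [Module R₂ P] [Module S₂ P] [SMulCommClass S₂ R₂ P]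
    {ρ : R →+* R₂} {σ : S →+* S₂} {f g : M →ₛₗ[ρ] N →ₛₗ[σ] P} {s : Set M} {t : Set N}
    (h : ∀ x ∈ s, ∀ y ∈ t, f x y = g x y) {x : M} {y : N}
    (hx : x ∈ Submodule.span R s) (hy : y ∈ Submodule.span S t) : f x y = g x y :=
  LinearMap.eqOn_span' (f := f.flip y) (g := g.flip y)
    (fun x' hx' => LinearMap.eqOn_span' (h x' hx') hy) hx

section KernelForm

variable {A AC : Type} [CommRing A] [Algebra ℂ A] [CommRing AC] [Algebra ℂ AC]

-- `kernelForm u ψ φ = ⟨ψ|Uφ⟩` for the operator `U` with kernel `u`.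
def kernelForm (u : AC →ₗ⋆[ℂ] ℂ) (p : A →ₐ[ℂ] AC) {m : A → AC} (hm : IsAntiAlgHom m) :
    A →ₗ⋆[ℂ] A →ₗ[ℂ] ℂ :=
  LinearMap.mk₂'ₛₗ _ _ (fun ψ φ => u (p ψ * m φ))
    (fun ψ ψ' φ => by rw [map_add, add_mul, map_add])
    (fun c ψ φ => by rw [map_smul, smul_mul_assoc, map_smulₛₗ])
    (fun ψ φ φ' => by rw [hm.1, mul_add, map_add])
    (fun c ψ φ => by simp only [hm.2.1, mul_smul_comm, map_smulₛₗ, Complex.conj_conj,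
      RingHom.id_apply])

theorem kernelForm_apply (u : AC →ₗ⋆[ℂ] ℂ) (p : A →ₐ[ℂ] AC) {m : A → AC} (hm : IsAntiAlgHom m)
    (ψ φ : A) : kernelForm u p hm ψ φ = u (p ψ * m φ) :=
  rfl

end KernelForm

theorem number_operator_kernel_general {V A AC : Type}
    [NormedAddCommGroup V] [InnerProductSpace ℂ V]
    [CommRing A] [Algebra ℂ A] [CommRing AC] [Algebra ℂ AC]
    (ι : V →ₗ[ℂ] A)
    (Bf : A →ₗ⋆[ℂ] A →ₗ[ℂ] ℂ) (hB : IsCanonInner ι Bf)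
    (N : A →ₗ[ℂ] A) (hN : ∀ n : ℕ, ∀ φ ∈ GradeOf (fun w => ι w) n, N φ = (n : ℂ) • φ)
    (p : A →ₐ[ℂ] AC) (m : A → AC) (hm : IsAntiAlgHom m)
    (gen : V ⊕ V → AC)
    (hgen : ∀ w : V ⊕ V, gen w = Sum.elim (fun v => p (ι v)) (fun v => m (ι v)) w)
    (mulC : (AC →ₗ⋆[ℂ] ℂ) → (AC →ₗ⋆[ℂ] ℂ) → (AC →ₗ⋆[ℂ] ℂ))
    (hmulC : IsConvProdOf gen mulC)
    (εC : AC →ₗ⋆[ℂ] ℂ) (hεC : IsCounitOf gen εC)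
    (ζV : AC →ₗ⋆[ℂ] ℂ) (hζq : IsQuadOf gen ζV)
    (hζpm : ∀ x y : V, ζV (p (ι x) * m (ι y)) = (inner ℂ x y : ℂ))
    (hζpp : ∀ x y : V, ζV (p (ι x) * p (ι y)) = 0)
    (hζmm : ∀ x y : V, ζV (m (ι x) * m (ι y)) = 0)
    (E : AC →ₗ⋆[ℂ] ℂ) (hE : IsGaussianOf gen mulC εC ζV E) :
    ∀ (n : ℕ) (φ ψ : A), φ ∈ GradeOf (fun w => ι w) n → ψ ∈ GradeOf (fun w => ι w) n →
      mulC ζV E (p ψ * m φ) = (n : ℂ) * Bf ψ φ ∧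
      Bf ψ (N φ) = (n : ℂ) * Bf ψ φ := by
  intro n φ ψ hφ hψ
  refine ⟨?_, by rw [hN n φ hφ, map_smul, smul_eq_mul]⟩
  have hprod : ∀ x y : Fin n → V, kernelForm (mulC ζV E) p hm (∏ i, ι (x i)) (∏ j, ι (y j)) =
      ((n : ℂ) • Bf) (∏ i, ι (x i)) (∏ j, ι (y j)) := by
    intro x y
    rw [kernelForm_apply, ← prod_gen_sumMap hgen hm,
      hE.mul_apply_prod hmulC hεC hζq _ (r := n) (by simp [two_mul]),
      hE.apply_prod_sumMap hB hgen hmulC hεC hζq hζpm hζpp hζmm]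
    rfl
  exact LinearMap.eqOn_span₂ (f := kernelForm (mulC ζV E) p hm) (g := (n : ℂ) • Bf)
    (by rintro _ ⟨x, rfl⟩ _ ⟨y, rfl⟩; exact hprod x y) hψ hφ

/-- The number operator `N` (equal to `n·I` on `SⁿV`) has kernel `ζ_V·e^{Z_V}`:
for `φ, ψ ∈ SⁿV`, `(ζ_V e^{Z_V})(ψ₊φ₋) = n⟨ψ|φ⟩ = ⟨ψ|Nφ⟩`. -/
theorem number_operator_kernel {V A AC : Type}
    [NormedAddCommGroup V] [InnerProductSpace ℂ V] [CompleteSpace V]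
    [CommRing A] [Algebra ℂ A] [CommRing AC] [Algebra ℂ AC]
    (ι : V →ₗ[ℂ] A) (hA : IsSymmAlg ι)
    (Bf : A →ₗ⋆[ℂ] A →ₗ[ℂ] ℂ) (hB : IsCanonInner ι Bf)
    (N : A →ₗ[ℂ] A) (hN : ∀ n : ℕ, ∀ φ ∈ GradeOf (fun w => ι w) n, N φ = (n : ℂ) • φ)
    (p : A →ₐ[ℂ] AC) (m : A → AC) (hm : IsAntiAlgHom m)
    (gen : V ⊕ V → AC)
    (hgen : ∀ w : V ⊕ V, gen w = Sum.elim (fun v => p (ι v)) (fun v => m (ι v)) w)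
    (hspanC : SpanProdsOf gen)
    (mulC : (AC →ₗ⋆[ℂ] ℂ) → (AC →ₗ⋆[ℂ] ℂ) → (AC →ₗ⋆[ℂ] ℂ))
    (hmulC : IsConvProdOf gen mulC)
    (εC : AC →ₗ⋆[ℂ] ℂ) (hεC : IsCounitOf gen εC)
    (ζV : AC →ₗ⋆[ℂ] ℂ) (hζq : IsQuadOf gen ζV)
    (hζpm : ∀ x y : V, ζV (p (ι x) * m (ι y)) = (inner ℂ x y : ℂ))
    (hζpp : ∀ x y : V, ζV (p (ι x) * p (ι y)) = 0)
    (hζmm : ∀ x y : V, ζV (m (ι x) * m (ι y)) = 0)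
    (E : AC →ₗ⋆[ℂ] ℂ) (hE : IsGaussianOf gen mulC εC ζV E) :
    ∀ (n : ℕ) (φ ψ : A), φ ∈ GradeOf (fun w => ι w) n → ψ ∈ GradeOf (fun w => ι w) n →
      mulC ζV E (p ψ * m φ) = (n : ℂ) * Bf ψ φ ∧
      Bf ψ (N φ) = (n : ℂ) * Bf ψ φ :=
  number_operator_kernel_general ι Bf hB N hN p m hm gen hgen mulC hmulC εC hεC ζV hζq hζpm hζpp
    hζmm E hE
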